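/- arXiv:1605.04955 — 2 statements merged into one kernel-verified Lean document; each statement's English description precedes it below -/
import Mathlib

section
/- (Stability of diffusion Fréchet functions) Let α and β be Borel probability measures on ℝ^d with finite first moment, let t > 0, and let μ be any coupling of α and β (a Borel probability measure on ℝ^d × ℝ^d whose first and second marginals are α and β). Then for every x ∈ ℝ^d, |V_{α,t}(x) - V_{β,t}(x)| ≤ (1/(C_d(2t)√(te))) ∫_{ℝ^d×ℝ^d} ‖z₁ - z₂‖ dμ(z₁,z₂). In particular, ‖V_{α,t} - V_{β,t}‖_∞ ≤ (1/(C_d(2t)√(te))) W₁(α,β), where W₁ is the 1-Wasserstein distance. -/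
/-!
Expanding the square and using the semigroup identity `∫ G_t(a,y) G_t(b,y) dy = G_{2t}(a,b)`
gives `d_t²(y,x) = 2 (G_{2t}(x,x) - G_{2t}(y,x))`. The profile `r ↦ exp(-r²/(8t))` of `G_{2t}` has
slope at most `1/(2√(te))`, so `y ↦ d_t²(y,x)` is Lipschitz with constant `1/(C_d(2t)√(te))`.
Integrating `|f z₁ - f z₂| ≤ L ‖z₁ - z₂‖` against the coupling `μ` bounds
`|∫ f dα - ∫ f dβ|` for any `L`-Lipschitz `f`.
-/

open MeasureTheory

/-- The Gaussian heat kernel `G_t(x,y) = (4πt)^{-d/2} exp(-‖y-x‖²/(4t))` on `ℝ^d`. -/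
noncomputable def heatKernel (d : ℕ) (t : ℝ) (x y : EuclideanSpace ℝ (Fin d)) : ℝ :=
  ((4 * Real.pi * t) ^ ((d : ℝ) / 2))⁻¹ * Real.exp (-‖y - x‖ ^ 2 / (4 * t))

/-- The squared diffusion distance `d_t²(x₁,x₂) = ‖G_t(x₁,·) - G_t(x₂,·)‖²_{L²}`. -/
noncomputable def diffusionDistSq (d : ℕ) (t : ℝ) (x₁ x₂ : EuclideanSpace ℝ (Fin d)) : ℝ :=
  ∫ y : EuclideanSpace ℝ (Fin d), (heatKernel d t x₁ y - heatKernel d t x₂ y) ^ 2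

/-- The diffusion Fréchet function `V_{α,t}(x) = ∫ d_t²(y,x) dα(y)`. -/
noncomputable def frechetFn (d : ℕ) (t : ℝ) (α : Measure (EuclideanSpace ℝ (Fin d)))
    (x : EuclideanSpace ℝ (Fin d)) : ℝ :=
  ∫ y, diffusionDistSq d t y x ∂α

open Real

lemma hasDerivAt_exp_neg_sq_div {s : ℝ} (r : ℝ) :
    HasDerivAt (fun r => exp (-r ^ 2 / (4 * s))) (-(r / (2 * s) * exp (-r ^ 2 / (4 * s)))) r := by
  convert (((hasDerivAt_pow 2 r).fun_neg).div_const (4 * s)).exp using 1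
  ring

lemma abs_div_mul_exp_neg_sq_div_le {s : ℝ} (hs : 0 < s) (r : ℝ) :
    |r / (2 * s) * exp (-r ^ 2 / (4 * s))| ≤ (√(2 * s * exp 1))⁻¹ := by
  refine abs_le_of_sq_le_sq ?_ (by positivity)
  calc (r / (2 * s) * exp (-r ^ 2 / (4 * s))) ^ 2
      = r ^ 2 / (2 * s) * exp (-(r ^ 2 / (2 * s))) / (2 * s) := by
        rw [mul_pow, ← exp_nat_mul]
        field_simp
        ring_nf
    _ ≤ exp (-1) / (2 * s) := by gcongr; exact mul_exp_neg_le_exp_neg_one _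
    _ = (√(2 * s * exp 1))⁻¹ ^ 2 := by
        rw [inv_pow, sq_sqrt (by positivity), exp_neg]
        field_simp

lemma abs_exp_neg_sq_div_sub_le {s : ℝ} (hs : 0 < s) (a b : ℝ) :
    |exp (-a ^ 2 / (4 * s)) - exp (-b ^ 2 / (4 * s))| ≤ (√(2 * s * exp 1))⁻¹ * |a - b| := by
  simpa only [Real.norm_eq_abs] using convex_univ.norm_image_sub_le_of_norm_hasDerivWithin_le
    (fun r _ => (hasDerivAt_exp_neg_sq_div r).hasDerivWithinAt)
    (fun r _ => by rw [norm_neg]; exact abs_div_mul_exp_neg_sq_div_le hs r)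
    (Set.mem_univ b) (Set.mem_univ a)

lemma integrable_exp_neg_mul_sq_norm_sub {V : Type*} [NormedAddCommGroup V]
    [InnerProductSpace ℝ V] [FiniteDimensional ℝ V] [MeasurableSpace V] [BorelSpace V]
    {b : ℝ} (hb : 0 < b) (m : V) :
    Integrable (fun v : V => exp (-b * ‖v - m‖ ^ 2)) := by
  have h := (GaussianFourier.integrable_cexp_neg_mul_sq_norm_add (V := V)
    (b := (b : ℂ)) (by simpa using hb) 0 0).norm
  have h0 : Integrable (fun v : V => exp (-b * ‖v‖ ^ 2)) :=
    h.congr (ae_of_all _ fun v => by simp [Complex.norm_exp, ← Complex.ofReal_pow])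
  exact h0.comp_sub_right m

lemma integrable_norm_fst_sub_snd {E : Type*} [NormedAddCommGroup E] [MeasurableSpace E]
    [BorelSpace E] [SecondCountableTopology E] {μ : Measure (E × E)}
    (h₁ : Integrable (fun y => ‖y‖) (μ.map Prod.fst))
    (h₂ : Integrable (fun y => ‖y‖) (μ.map Prod.snd)) :
    Integrable (fun z => ‖z.1 - z.2‖) μ := by
  refine ((h₁.comp_measurable measurable_fst).add (h₂.comp_measurable measurable_snd)).mono'
    (by fun_prop) (ae_of_all _ fun z => ?_)
  simpa using norm_sub_le z.1 z.2

theorem abs_integral_comp_fst_sub_integral_comp_snd_le {X : Type*} [PseudoMetricSpace X]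
    [MeasurableSpace X] {f : X → ℝ} {K : NNReal} (hf : LipschitzWith K f) {μ : Measure (X × X)}
    (h₁ : Integrable (fun z => f z.1) μ) (h₂ : Integrable (fun z => f z.2) μ)
    (hdist : Integrable (fun z => dist z.1 z.2) μ) :
    |∫ z, f z.1 ∂μ - ∫ z, f z.2 ∂μ| ≤ K * ∫ z, dist z.1 z.2 ∂μ := by
  rw [← integral_sub h₁ h₂, ← integral_const_mul]
  calc _ ≤ ∫ z, |f z.1 - f z.2| ∂μ := abs_integral_le_integral_abs
    _ ≤ _ := integral_mono (h₁.sub h₂).abs (hdist.const_mul _) fun z => by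
        simpa only [Real.dist_eq] using hf.dist_le_mul z.1 z.2

section HeatKernel

variable {d : ℕ} {t : ℝ}

lemma heatKernel_self (x : EuclideanSpace ℝ (Fin d)) :
    heatKernel d t x x = ((4 * π * t) ^ ((d : ℝ) / 2))⁻¹ := by
  simp [heatKernel]

lemma heatKernel_nonneg (ht : 0 ≤ t) (x y : EuclideanSpace ℝ (Fin d)) : 0 ≤ heatKernel d t x y := by
  unfold heatKernel
  positivity

lemma heatKernel_mul_heatKernel (ht : 0 < t) (a b y : EuclideanSpace ℝ (Fin d)) :
    heatKernel d t a y * heatKernel d t b y =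
      ((4 * π * t) ^ ((d : ℝ) / 2))⁻¹ ^ 2 * exp (-‖b - a‖ ^ 2 / (4 * (2 * t))) *
        exp (-(2 * t)⁻¹ * ‖y - midpoint ℝ a b‖ ^ 2) := by
  have apollonius :=
    EuclideanGeometry.dist_sq_add_dist_sq_eq_two_mul_dist_midpoint_sq_add_half_dist_sq y a b
  simp only [dist_eq_norm] at apollonius
  unfold heatKernel
  rw [mul_mul_mul_comm, ← exp_add, ← sq, mul_assoc _ (exp _), ← exp_add, norm_sub_rev b a]
  congr 2
  field_simp
  linear_combination -2 * apollonius

lemma integrable_heatKernel_mul_heatKernel (ht : 0 < t) (a b : EuclideanSpace ℝ (Fin d)) :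
    Integrable (fun y => heatKernel d t a y * heatKernel d t b y) := by
  simp_rw [heatKernel_mul_heatKernel ht]
  exact (integrable_exp_neg_mul_sq_norm_sub (by positivity) _).const_mul _

lemma integral_heatKernel_mul_heatKernel (ht : 0 < t) (a b : EuclideanSpace ℝ (Fin d)) :
    ∫ y, heatKernel d t a y * heatKernel d t b y = heatKernel d (2 * t) a b := by
  simp_rw [heatKernel_mul_heatKernel ht]
  rw [integral_const_mul, integral_sub_right_eq_self (fun y => exp (-(2 * t)⁻¹ * ‖y‖ ^ 2)),
    GaussianFourier.integral_rexp_neg_mul_sq_norm (by positivity), finrank_euclideanSpace_fin,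
    heatKernel]
  have hnormalization : ((4 * π * t) ^ ((d : ℝ) / 2))⁻¹ ^ 2 * (π / (2 * t)⁻¹) ^ ((d : ℝ) / 2) =
      ((4 * π * (2 * t)) ^ ((d : ℝ) / 2))⁻¹ := by
    rw [← inv_rpow (by positivity), sq, ← mul_rpow (by positivity) (by positivity),
      ← mul_rpow (by positivity) (by positivity), ← inv_rpow (by positivity)]
    congr 1
    field_simp
    norm_num
  rw [mul_right_comm, hnormalization]

lemma abs_heatKernel_sub_heatKernel_le (ht : 0 < t) (x y₁ y₂ : EuclideanSpace ℝ (Fin d)) :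
    |heatKernel d t y₁ x - heatKernel d t y₂ x| ≤
      ((4 * π * t) ^ ((d : ℝ) / 2))⁻¹ * (√(2 * t * exp 1))⁻¹ * ‖y₁ - y₂‖ := by
  unfold heatKernel
  rw [← mul_sub, abs_mul, abs_of_pos (by positivity), mul_assoc _ _ ‖y₁ - y₂‖]
  refine mul_le_mul_of_nonneg_left ?_ (by positivity)
  calc _ ≤ (√(2 * t * exp 1))⁻¹ * |‖x - y₁‖ - ‖x - y₂‖| := abs_exp_neg_sq_div_sub_le ht _ _
    _ ≤ (√(2 * t * exp 1))⁻¹ * ‖y₁ - y₂‖ := by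
        gcongr
        simpa [norm_sub_rev y₂ y₁] using abs_norm_sub_norm_le (x - y₁) (x - y₂)

lemma diffusionDistSq_eq (ht : 0 < t) (x₁ x₂ : EuclideanSpace ℝ (Fin d)) :
    diffusionDistSq d t x₁ x₂ = heatKernel d (2 * t) x₁ x₁ + heatKernel d (2 * t) x₂ x₂ -
      2 * heatKernel d (2 * t) x₁ x₂ := by
  have hI := integrable_heatKernel_mul_heatKernel (d := d) ht
  have expand : ∀ y, (heatKernel d t x₁ y - heatKernel d t x₂ y) ^ 2 =
      heatKernel d t x₁ y * heatKernel d t x₁ y + heatKernel d t x₂ y * heatKernel d t x₂ y -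
        2 * (heatKernel d t x₁ y * heatKernel d t x₂ y) := fun y => by ring
  rw [diffusionDistSq]
  simp_rw [expand]
  rw [integral_sub ((hI _ _).fun_add (hI _ _)) ((hI _ _).const_mul 2),
    integral_add (hI _ _) (hI _ _), integral_const_mul]
  simp only [integral_heatKernel_mul_heatKernel ht]

lemma diffusionDistSq_nonneg (x₁ x₂ : EuclideanSpace ℝ (Fin d)) : 0 ≤ diffusionDistSq d t x₁ x₂ :=
  integral_nonneg fun _ => sq_nonneg _

lemma diffusionDistSq_le (ht : 0 < t) (x₁ x₂ : EuclideanSpace ℝ (Fin d)) :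
    diffusionDistSq d t x₁ x₂ ≤ 2 * ((4 * π * (2 * t)) ^ ((d : ℝ) / 2))⁻¹ := by
  rw [diffusionDistSq_eq ht, heatKernel_self, heatKernel_self]
  linarith [heatKernel_nonneg (by positivity : 0 ≤ 2 * t) x₁ x₂]

lemma lipschitzWith_diffusionDistSq_left (ht : 0 < t) (x : EuclideanSpace ℝ (Fin d)) :
    LipschitzWith (Real.toNNReal (1 / ((8 * π * t) ^ ((d : ℝ) / 2) * √(t * exp 1))))
      (fun y => diffusionDistSq d t y x) := by
  refine LipschitzWith.of_dist_le_mul fun y₁ y₂ => ?_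
  have hconst : 2 * (((4 * π * (2 * t)) ^ ((d : ℝ) / 2))⁻¹ * (√(2 * (2 * t) * exp 1))⁻¹) =
      1 / ((8 * π * t) ^ ((d : ℝ) / 2) * √(t * exp 1)) := by
    rw [show 4 * π * (2 * t) = 8 * π * t by ring,
      show 2 * (2 * t) * exp 1 = 2 ^ 2 * (t * exp 1) by ring,
      sqrt_mul (by positivity), sqrt_sq (by norm_num)]
    field_simp
  rw [Real.coe_toNNReal _ (by positivity), Real.dist_eq, dist_eq_norm, diffusionDistSq_eq ht,
    diffusionDistSq_eq ht, ← hconst]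
  simp only [heatKernel_self]
  calc _ = 2 * |heatKernel d (2 * t) y₁ x - heatKernel d (2 * t) y₂ x| := by
        rw [← abs_two, ← abs_mul, ← abs_neg]
        ring_nf
    _ ≤ _ := by
        rw [mul_assoc 2]
        gcongr
        exact abs_heatKernel_sub_heatKernel_le (by positivity) x y₁ y₂

lemma integrable_diffusionDistSq_left (ht : 0 < t) (x : EuclideanSpace ℝ (Fin d))
    (ν : Measure (EuclideanSpace ℝ (Fin d))) [IsFiniteMeasure ν] :
    Integrable (fun y => diffusionDistSq d t y x) ν :=
  Integrable.of_mem_Icc 0 _ (lipschitzWith_diffusionDistSq_left ht x).continuous.aemeasurable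
    (ae_of_all _ fun y => ⟨diffusionDistSq_nonneg y x, diffusionDistSq_le ht y x⟩)

end HeatKernel

theorem frechet_stability_general (d : ℕ) (t : ℝ) (ht : 0 < t)
    (α β : Measure (EuclideanSpace ℝ (Fin d)))
    (hα : Integrable (fun y => ‖y‖) α) (hβ : Integrable (fun y => ‖y‖) β)
    (μ : Measure (EuclideanSpace ℝ (Fin d) × EuclideanSpace ℝ (Fin d)))
    [IsProbabilityMeasure μ]
    (hμ₁ : μ.map Prod.fst = α) (hμ₂ : μ.map Prod.snd = β)
    (x : EuclideanSpace ℝ (Fin d)) :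
    |frechetFn d t α x - frechetFn d t β x| ≤
      1 / ((8 * Real.pi * t) ^ ((d : ℝ) / 2) * Real.sqrt (t * Real.exp 1)) *
        ∫ z, ‖z.1 - z.2‖ ∂μ := by
  have hf := lipschitzWith_diffusionDistSq_left ht x
  subst hμ₁ hμ₂
  rw [frechetFn, frechetFn,
    integral_map measurable_fst.aemeasurable hf.continuous.aestronglyMeasurable,
    integral_map measurable_snd.aemeasurable hf.continuous.aestronglyMeasurable]
  refine (abs_integral_comp_fst_sub_integral_comp_snd_le hf
    ((integrable_diffusionDistSq_left ht x _).comp_measurable measurable_fst)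
    ((integrable_diffusionDistSq_left ht x _).comp_measurable measurable_snd)
    (by simpa only [dist_eq_norm] using integrable_norm_fst_sub_snd hα hβ)).trans_eq ?_
  rw [Real.coe_toNNReal _ (by positivity)]
  simp only [dist_eq_norm]

/-- Stability of diffusion Fréchet functions: for probability measures `α, β` with finite
first moment and any coupling `μ` of `α` and `β`,
`|V_{α,t}(x) - V_{β,t}(x)| ≤ (1/(C_d(2t)√(te))) ∫ ‖z₁ - z₂‖ dμ(z₁,z₂)` for every `x`;
in particular `‖V_{α,t} - V_{β,t}‖_∞ ≤ (1/(C_d(2t)√(te))) W₁(α,β)`. -/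
theorem frechet_stability (d : ℕ) (t : ℝ) (ht : 0 < t)
    (α β : Measure (EuclideanSpace ℝ (Fin d)))
    [IsProbabilityMeasure α] [IsProbabilityMeasure β]
    (hα : Integrable (fun y => ‖y‖) α) (hβ : Integrable (fun y => ‖y‖) β)
    (μ : Measure (EuclideanSpace ℝ (Fin d) × EuclideanSpace ℝ (Fin d)))
    [IsProbabilityMeasure μ]
    (hμ₁ : μ.map Prod.fst = α) (hμ₂ : μ.map Prod.snd = β)
    (x : EuclideanSpace ℝ (Fin d)) :
    |frechetFn d t α x - frechetFn d t β x| ≤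
      1 / ((8 * Real.pi * t) ^ ((d : ℝ) / 2) * Real.sqrt (t * Real.exp 1)) *
        ∫ z, ‖z.1 - z.2‖ ∂μ :=
  frechet_stability_general d t ht α β hα hβ μ hμ₁ hμ₂ x
end

section
/- (Stability of diffusion Fréchet vectors) Let Δ be a real symmetric n×n matrix with an orthonormal eigenbasis φ₁,…,φₙ of ℝⁿ, Δφ_k = λ_k φ_k, where λ₁ = 0, λ_k > 0 for k ≥ 2, and φ₁ is a constant vector. Let ξ, ζ ∈ ℝⁿ be probability distributions on the index set {1,…,n} (nonnegative entries summing to 1), and let μ be any coupling of ξ and ζ, i.e., an n×n matrix with nonnegative entries μ_{ij} whose row sums give ξ and column sums give ζ. Define d_t(i,j) = ‖e^{-tΔ}e_i - e^{-tΔ}e_j‖, the commute-time distance d_CT(i,j) = (Σ_{k=2}^n (1/λ_k)(φ_k(i)-φ_k(j))²)^{1/2}, and the diffusion Fréchet vector F_{ξ,t}(i) = Σ_{j=1}^n d_t²(i,j) ξ_j. Then for every t > 0 and every index ℓ: |F_{ξ,t}(ℓ) - F_{ζ,t}(ℓ)| ≤ 4 √((Tr(e^{-2tΔ}) - 1)/(2et))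 · Σ_{i,j} d_CT(i,j) μ_{ij}. In particular, ‖F_{ξ,t} - F_{ζ,t}‖_∞ ≤ 4 √((Tr(e^{-2tΔ}) - 1)/(2et)) · W₁(ξ,ζ), where W₁ is the 1-Wasserstein distance with respect to the commute-time distance. -/
open NormedSpace

/-- The matrix heat kernel `e^{-tΔ}` applied to the `i`-th standard basis vector. -/
noncomputable def heatVec {n : ℕ} (Δ : Matrix (Fin n) (Fin n) ℝ) (t : ℝ) (i : Fin n) :
    Fin n → ℝ :=
  (exp (-(t • Δ))).mulVec (Pi.single i 1)

/-- The squared network diffusion distance `d_t²(i,j) = ‖e^{-tΔ}e_i - e^{-tΔ}e_j‖²`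
(Euclidean norm on `ℝⁿ`). -/
noncomputable def netDiffSq {n : ℕ} (Δ : Matrix (Fin n) (Fin n) ℝ) (t : ℝ) (i j : Fin n) : ℝ :=
  ∑ m, (heatVec Δ t i m - heatVec Δ t j m) ^ 2

/-- The commute-time distance
`d_CT(i,j) = (Σ_{k≥2} (1/λ_k)(φ_k(i) - φ_k(j))²)^{1/2}`. -/
noncomputable def commuteTimeDist {n : ℕ} [NeZero n] (φ : Fin n → Fin n → ℝ) (lam : Fin n → ℝ)
    (i j : Fin n) : ℝ :=
  Real.sqrt (∑ k ∈ Finset.univ.filter (fun k => k ≠ (0 : Fin n)),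
    (lam k)⁻¹ * (φ k i - φ k j) ^ 2)

/-- The diffusion Fréchet vector `F_{ξ,t}(i) = Σ_j d_t²(i,j) ξ_j`. -/
noncomputable def frechetVec {n : ℕ} (Δ : Matrix (Fin n) (Fin n) ℝ) (t : ℝ) (ξ : Fin n → ℝ)
    (i : Fin n) : ℝ :=
  ∑ j, netDiffSq Δ t i j * ξ j

/-! In the eigenbasis, `d_t²(i,j) = Σ_{k ≥ 2} e^{-2tλ_k} (φ_k(i) - φ_k(j))²`. Since
`λ e^{-2tλ} ≤ 1/(2et)`, this gives `d_t(i,j) ≤ d_CT(i,j)/√(2et)`, and since `|φ_k(i)| ≤ 1`,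
`d_t ≤ 2√(Tr e^{-2tΔ} - 1)`. Factoring `d_t²(ℓ,i) - d_t²(ℓ,j)` as a difference of squares and
using the triangle inequality for `d_t` shows that `i ↦ d_t²(ℓ,i)` is Lipschitz for `d_CT` with
constant `4√((Tr e^{-2tΔ} - 1)/(2et))`; integrating a Lipschitz function against the two marginals
of a coupling then gives the bound. -/

open Matrix

theorem abs_dist_sq_sub_dist_sq_le {α : Type*} [PseudoMetricSpace α] (x y z : α) :
    |dist z x ^ 2 - dist z y ^ 2| ≤ dist x y * (dist z x + dist z y) := by
  rw [sq_sub_sq, abs_mul, abs_of_nonneg (by positivity), mul_comm, dist_comm z x, dist_comm z y]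
  exact mul_le_mul_of_nonneg_right (abs_dist_sub_le x y z) (by positivity)

/-- The easy half of Kantorovich duality. -/
theorem abs_sum_mul_sub_sum_mul_le_of_coupling {ι : Type*} [Fintype ι] {f : ι → ℝ}
    {c : ι → ι → ℝ} {L : ℝ} (hf : ∀ i j, |f i - f j| ≤ L * c i j) {ξ ζ : ι → ℝ}
    {μ : Matrix ι ι ℝ} (hμ : ∀ i j, 0 ≤ μ i j) (hrow : ∀ i, ∑ j, μ i j = ξ i)
    (hcol : ∀ j, ∑ i, μ i j = ζ j) :
    |∑ i, f i * ξ i - ∑ j, f j * ζ j| ≤ L * ∑ i, ∑ j, c i j * μ i j := by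
  have hsplit : ∑ i, f i * ξ i - ∑ j, f j * ζ j = ∑ i, ∑ j, (f i - f j) * μ i j := by
    simp only [← hrow, ← hcol, Finset.mul_sum, sub_mul, Finset.sum_sub_distrib]
    rw [Finset.sum_comm (f := fun j i => f j * μ i j)]
  rw [hsplit, Finset.mul_sum]
  refine (Finset.abs_sum_le_sum_abs _ _).trans (Finset.sum_le_sum fun i _ => ?_)
  rw [Finset.mul_sum]
  refine (Finset.abs_sum_le_sum_abs _ _).trans (Finset.sum_le_sum fun j _ => ?_)
  rw [abs_mul, abs_of_nonneg (hμ i j), ← mul_assoc]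
  exact mul_le_mul_of_nonneg_right (hf i j) (hμ i j)

theorem Matrix.sum_sq_transpose_mulVec {ι : Type*} [Fintype ι] [DecidableEq ι] {Q : Matrix ι ι ℝ}
    (hQ : Q * Qᵀ = 1) (c : ι → ℝ) : ∑ m, (Qᵀ *ᵥ c) m ^ 2 = ∑ k, c k ^ 2 := by
  have h : (Qᵀ *ᵥ c) ⬝ᵥ (Qᵀ *ᵥ c) = c ⬝ᵥ c := by
    rw [dotProduct_mulVec, vecMul_transpose, mulVec_mulVec, hQ, one_mulVec, dotProduct_comm]
  simpa only [dotProduct, sq] using h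

theorem Real.mul_exp_neg_two_mul_le {t : ℝ} (ht : 0 < t) (x : ℝ) :
    x * exp (-(2 * t * x)) ≤ (2 * exp 1 * t)⁻¹ := by
  have h := mul_exp_neg_le_exp_neg_one (2 * t * x)
  calc x * exp (-(2 * t * x)) = 2 * t * x * exp (-(2 * t * x)) * (2 * t)⁻¹ := by
        field_simp
    _ ≤ exp (-1) * (2 * t)⁻¹ := by gcongr
    _ = (2 * exp 1 * t)⁻¹ := by rw [exp_neg]; ring

theorem sq_le_one_of_sum_mul_self_eq_one {ι : Type*} [Fintype ι] {v : ι → ℝ}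
    (hv : ∑ i, v i * v i = 1) (m : ι) : v m ^ 2 ≤ 1 := by
  rw [← hv, sq]
  exact Finset.single_le_sum (f := fun i => v i * v i) (fun i _ => mul_self_nonneg _)
    (Finset.mem_univ m)

theorem netDiffSq_eq_dist_sq {n : ℕ} (Δ : Matrix (Fin n) (Fin n) ℝ) (t : ℝ) (i j : Fin n) :
    netDiffSq Δ t i j = dist (WithLp.toLp 2 (heatVec Δ t i) : EuclideanSpace ℝ (Fin n))
      (WithLp.toLp 2 (heatVec Δ t j)) ^ 2 := by
  rw [EuclideanSpace.dist_eq, Real.sq_sqrt (by positivity)]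
  simp [netDiffSq, Real.dist_eq, sq_abs]

section Spectral

variable {n : ℕ} {Δ : Matrix (Fin n) (Fin n) ℝ} {φ : Fin n → Fin n → ℝ} {lam : Fin n → ℝ}

theorem of_mul_transpose_eq_one_of_orthonormal
    (horth : ∀ k l, ∑ i, φ k i * φ l i = if k = l then (1 : ℝ) else 0) :
    Matrix.of φ * (Matrix.of φ)ᵀ = 1 := by
  ext k l
  simpa [Matrix.mul_apply, Matrix.one_apply] using horth k l

/-- With the eigenvectors as rows of `Q = Matrix.of φ`, this is `Δ = Qᵀ diag(λ) Q`. -/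
theorem eq_transpose_mul_diagonal_mul_of_eigenvectors
    (horth : ∀ k l, ∑ i, φ k i * φ l i = if k = l then (1 : ℝ) else 0)
    (heig : ∀ k, Δ *ᵥ φ k = lam k • φ k) :
    Δ = (Matrix.of φ)ᵀ * diagonal lam * Matrix.of φ := by
  have hcols : Δ * (Matrix.of φ)ᵀ = (Matrix.of φ)ᵀ * diagonal lam := by
    ext i k
    simpa [Matrix.mul_apply, mulVec, dotProduct, diagonal_apply, mul_comm] using congrFun (heig k) i
  rw [← hcols, Matrix.mul_assoc, mul_eq_one_comm.mp (of_mul_transpose_eq_one_of_orthonormal horth),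
    Matrix.mul_one]

theorem exp_neg_smul_eq_of_eigenvectors
    (horth : ∀ k l, ∑ i, φ k i * φ l i = if k = l then (1 : ℝ) else 0)
    (heig : ∀ k, Δ *ᵥ φ k = lam k • φ k) (s : ℝ) :
    exp (-(s • Δ)) =
      (Matrix.of φ)ᵀ * diagonal (fun k => Real.exp (-(s * lam k))) * Matrix.of φ := by
  have hQ := of_mul_transpose_eq_one_of_orthonormal horth
  have hinv : (Matrix.of φ)⁻¹ = (Matrix.of φ)ᵀ := inv_eq_right_inv hQ
  have hunit : IsUnit (Matrix.of φ) :=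
    (isUnit_iff_isUnit_det _).mpr (isUnit_det_of_right_inverse hQ)
  have hconj : -(s • Δ) = (Matrix.of φ)⁻¹ * diagonal (fun k => -(s * lam k)) * Matrix.of φ := by
    rw [hinv, eq_transpose_mul_diagonal_mul_of_eigenvectors horth heig]
    rw [← Matrix.smul_mul, ← Matrix.mul_smul, ← diagonal_smul, ← Matrix.neg_mul,
      ← Matrix.mul_neg, diagonal_neg]
    rfl
  rw [hconj, exp_conj' _ _ hunit, exp_diagonal, hinv]
  simp only [Pi.exp_def, Real.exp_eq_exp_ℝ]

theorem heatVec_eq_transpose_mulVec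
    (horth : ∀ k l, ∑ i, φ k i * φ l i = if k = l then (1 : ℝ) else 0)
    (heig : ∀ k, Δ *ᵥ φ k = lam k • φ k) (t : ℝ) (i : Fin n) :
    heatVec Δ t i = (Matrix.of φ)ᵀ *ᵥ fun k => Real.exp (-(t * lam k)) * φ k i := by
  rw [heatVec, exp_neg_smul_eq_of_eigenvectors horth heig, ← mulVec_mulVec, mulVec_single_one,
    ← mulVec_mulVec]
  congr 1
  ext k
  simp [mulVec_diagonal]

theorem netDiffSq_eq_sum
    (horth : ∀ k l, ∑ i, φ k i * φ l i = if k = l then (1 : ℝ) else 0)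
    (heig : ∀ k, Δ *ᵥ φ k = lam k • φ k) (t : ℝ) (i j : Fin n) :
    netDiffSq Δ t i j = ∑ k, Real.exp (-(2 * t * lam k)) * (φ k i - φ k j) ^ 2 := by
  simp only [netDiffSq, heatVec_eq_transpose_mulVec horth heig, ← Pi.sub_apply, ← mulVec_sub,
    sum_sq_transpose_mulVec (of_mul_transpose_eq_one_of_orthonormal horth)]
  refine Finset.sum_congr rfl fun k _ => ?_
  rw [show -(2 * t * lam k) = -(t * lam k) + -(t * lam k) by ring, Real.exp_add]
  simp only [Pi.sub_apply]
  ring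

theorem trace_exp_neg_smul_eq_sum
    (horth : ∀ k l, ∑ i, φ k i * φ l i = if k = l then (1 : ℝ) else 0)
    (heig : ∀ k, Δ *ᵥ φ k = lam k • φ k) (s : ℝ) :
    (exp (-(s • Δ))).trace = ∑ k, Real.exp (-(s * lam k)) := by
  rw [exp_neg_smul_eq_of_eigenvectors horth heig, trace_mul_comm, ← Matrix.mul_assoc,
    of_mul_transpose_eq_one_of_orthonormal horth, Matrix.one_mul, trace_diagonal]

variable [NeZero n]

/-- The constant eigenvector `φ 0` does not see differences. -/
theorem netDiffSq_eq_sum_ne_zero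
    (horth : ∀ k l, ∑ i, φ k i * φ l i = if k = l then (1 : ℝ) else 0)
    (heig : ∀ k, Δ *ᵥ φ k = lam k • φ k) (hconst : ∃ c : ℝ, ∀ i, φ 0 i = c)
    (t : ℝ) (i j : Fin n) :
    netDiffSq Δ t i j = ∑ k ∈ Finset.univ.filter (fun k => k ≠ (0 : Fin n)),
      Real.exp (-(2 * t * lam k)) * (φ k i - φ k j) ^ 2 := by
  obtain ⟨c, hc⟩ := hconst
  rw [netDiffSq_eq_sum horth heig, Finset.filter_ne',
    ← Finset.add_sum_erase _ _ (Finset.mem_univ 0), hc, hc, sub_self]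
  simp

theorem trace_exp_neg_two_mul_smul_sub_one
    (horth : ∀ k l, ∑ i, φ k i * φ l i = if k = l then (1 : ℝ) else 0)
    (heig : ∀ k, Δ *ᵥ φ k = lam k • φ k) (h0 : lam 0 = 0) (t : ℝ) :
    (exp (-((2 * t) • Δ))).trace - 1 = ∑ k ∈ Finset.univ.filter (fun k => k ≠ (0 : Fin n)),
      Real.exp (-(2 * t * lam k)) := by
  rw [trace_exp_neg_smul_eq_sum horth heig, Finset.filter_ne',
    ← Finset.add_sum_erase _ _ (Finset.mem_univ 0), h0]
  simp

theorem netDiffSq_le_inv_mul_commuteTimeDist_sq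
    (horth : ∀ k l, ∑ i, φ k i * φ l i = if k = l then (1 : ℝ) else 0)
    (heig : ∀ k, Δ *ᵥ φ k = lam k • φ k) (hpos : ∀ k, k ≠ 0 → 0 < lam k)
    (hconst : ∃ c : ℝ, ∀ i, φ 0 i = c) {t : ℝ} (ht : 0 < t) (i j : Fin n) :
    netDiffSq Δ t i j ≤ (2 * Real.exp 1 * t)⁻¹ * commuteTimeDist φ lam i j ^ 2 := by
  have hlam : ∀ k ∈ Finset.univ.filter (fun k => k ≠ (0 : Fin n)), 0 < lam k := fun k hk =>
    hpos k (Finset.mem_filter.mp hk).2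
  rw [commuteTimeDist,
    Real.sq_sqrt (Finset.sum_nonneg fun k hk => by have := hlam k hk; positivity), Finset.mul_sum,
    netDiffSq_eq_sum_ne_zero horth heig hconst]
  refine Finset.sum_le_sum fun k hk => ?_
  have hk := hlam k hk
  calc Real.exp (-(2 * t * lam k)) * (φ k i - φ k j) ^ 2
      = lam k * Real.exp (-(2 * t * lam k)) * ((lam k)⁻¹ * (φ k i - φ k j) ^ 2) := by
        field_simp
    _ ≤ (2 * Real.exp 1 * t)⁻¹ * ((lam k)⁻¹ * (φ k i - φ k j) ^ 2) := by
        gcongr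
        exact Real.mul_exp_neg_two_mul_le ht (lam k)

theorem netDiffSq_le_four_mul_trace_sub_one
    (horth : ∀ k l, ∑ i, φ k i * φ l i = if k = l then (1 : ℝ) else 0)
    (heig : ∀ k, Δ *ᵥ φ k = lam k • φ k) (h0 : lam 0 = 0)
    (hconst : ∃ c : ℝ, ∀ i, φ 0 i = c) (t : ℝ) (i j : Fin n) :
    netDiffSq Δ t i j ≤ 4 * ((exp (-((2 * t) • Δ))).trace - 1) := by
  rw [trace_exp_neg_two_mul_smul_sub_one horth heig h0, Finset.mul_sum,
    netDiffSq_eq_sum_ne_zero horth heig hconst]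
  refine Finset.sum_le_sum fun k _ => ?_
  have hi := sq_le_one_of_sum_mul_self_eq_one (by simpa using horth k k) i
  have hj := sq_le_one_of_sum_mul_self_eq_one (by simpa using horth k k) j
  have hdiff : (φ k i - φ k j) ^ 2 ≤ 4 := by nlinarith [sq_nonneg (φ k i + φ k j)]
  rw [mul_comm 4]
  exact mul_le_mul_of_nonneg_left hdiff (Real.exp_pos _).le

theorem abs_netDiffSq_sub_le
    (horth : ∀ k l, ∑ i, φ k i * φ l i = if k = l then (1 : ℝ) else 0)
    (heig : ∀ k, Δ *ᵥ φ k = lam k • φ k)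
    (h0 : lam 0 = 0) (hpos : ∀ k, k ≠ 0 → 0 < lam k)
    (hconst : ∃ c : ℝ, ∀ i, φ 0 i = c) {t : ℝ} (ht : 0 < t) (l i j : Fin n) :
    |netDiffSq Δ t l i - netDiffSq Δ t l j| ≤
      4 * Real.sqrt (((exp (-((2 * t) • Δ))).trace - 1) / (2 * Real.exp 1 * t)) *
        commuteTimeDist φ lam i j := by
  set T := (exp (-((2 * t) • Δ))).trace
  set x : Fin n → EuclideanSpace ℝ (Fin n) := fun a => WithLp.toLp 2 (heatVec Δ t a)
  have hdist : ∀ a b, dist (x a) (x b) = Real.sqrt (netDiffSq Δ t a b) := fun a b => by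
    rw [netDiffSq_eq_dist_sq, Real.sqrt_sq dist_nonneg]
  have hCT : 0 ≤ commuteTimeDist φ lam i j := Real.sqrt_nonneg _
  have hij : dist (x i) (x j) ≤ Real.sqrt (2 * Real.exp 1 * t)⁻¹ * commuteTimeDist φ lam i j := by
    rw [hdist, ← Real.sqrt_sq hCT, ← Real.sqrt_mul (by positivity)]
    exact Real.sqrt_le_sqrt (netDiffSq_le_inv_mul_commuteTimeDist_sq horth heig hpos hconst ht i j)
  have hl : ∀ a, dist (x l) (x a) ≤ 2 * Real.sqrt (T - 1) := fun a => by
    rw [hdist, show (2 : ℝ) = Real.sqrt 4 by norm_num [show (4 : ℝ) = 2 ^ 2 by norm_num],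
      ← Real.sqrt_mul (by norm_num)]
    exact Real.sqrt_le_sqrt (netDiffSq_le_four_mul_trace_sub_one horth heig h0 hconst t l a)
  calc |netDiffSq Δ t l i - netDiffSq Δ t l j|
      = |dist (x l) (x i) ^ 2 - dist (x l) (x j) ^ 2| := by
        rw [netDiffSq_eq_dist_sq, netDiffSq_eq_dist_sq]
    _ ≤ dist (x i) (x j) * (dist (x l) (x i) + dist (x l) (x j)) :=
        abs_dist_sq_sub_dist_sq_le _ _ _
    _ ≤ (Real.sqrt (2 * Real.exp 1 * t)⁻¹ * commuteTimeDist φ lam i j) *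
          (2 * Real.sqrt (T - 1) + 2 * Real.sqrt (T - 1)) := by
        gcongr
        · exact hl i
        · exact hl j
    _ = 4 * Real.sqrt ((T - 1) / (2 * Real.exp 1 * t)) * commuteTimeDist φ lam i j := by
        rw [div_eq_mul_inv, Real.sqrt_mul' _ (by positivity)]
        ring

end Spectral

theorem frechetVec_stability_general (n : ℕ) [NeZero n]
    (Δ : Matrix (Fin n) (Fin n) ℝ)
    (φ : Fin n → Fin n → ℝ) (lam : Fin n → ℝ)
    (horth : ∀ k l, ∑ i, φ k i * φ l i = if k = l then (1 : ℝ) else 0)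
    (heig : ∀ k, Δ.mulVec (φ k) = lam k • φ k)
    (h0 : lam 0 = 0) (hpos : ∀ k, k ≠ 0 → 0 < lam k)
    (hconst : ∃ c : ℝ, ∀ i, φ 0 i = c)
    (ξ ζ : Fin n → ℝ)
    (μ : Matrix (Fin n) (Fin n) ℝ) (hμ : ∀ i j, 0 ≤ μ i j)
    (hrow : ∀ i, ∑ j, μ i j = ξ i) (hcol : ∀ j, ∑ i, μ i j = ζ j)
    (t : ℝ) (ht : 0 < t) (l : Fin n) :
    |frechetVec Δ t ξ l - frechetVec Δ t ζ l| ≤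
      4 * Real.sqrt (((exp (-((2 * t) • Δ))).trace - 1) / (2 * Real.exp 1 * t)) *
        ∑ i, ∑ j, commuteTimeDist φ lam i j * μ i j :=
  abs_sum_mul_sub_sum_mul_le_of_coupling
    (abs_netDiffSq_sub_le horth heig h0 hpos hconst ht l) hμ hrow hcol

/-- Stability of diffusion Fréchet vectors: for probability distributions `ξ, ζ` on the nodes
and any coupling `μ` of `ξ` and `ζ`,
`|F_{ξ,t}(ℓ) - F_{ζ,t}(ℓ)| ≤ 4 √((Tr(e^{-2tΔ}) - 1)/(2et)) Σ_{i,j} d_CT(i,j) μ_{ij}`;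
in particular `‖F_{ξ,t} - F_{ζ,t}‖_∞ ≤ 4 √((Tr(e^{-2tΔ}) - 1)/(2et)) W₁(ξ,ζ)`. -/
theorem frechetVec_stability (n : ℕ) [NeZero n]
    (Δ : Matrix (Fin n) (Fin n) ℝ) (hΔ : Δ.IsSymm)
    (φ : Fin n → Fin n → ℝ) (lam : Fin n → ℝ)
    (horth : ∀ k l, ∑ i, φ k i * φ l i = if k = l then (1 : ℝ) else 0)
    (heig : ∀ k, Δ.mulVec (φ k) = lam k • φ k)
    (h0 : lam 0 = 0) (hpos : ∀ k, k ≠ 0 → 0 < lam k)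
    (hconst : ∃ c : ℝ, ∀ i, φ 0 i = c)
    (ξ ζ : Fin n → ℝ)
    (hξ : ∀ i, 0 ≤ ξ i) (hξ1 : ∑ i, ξ i = 1)
    (hζ : ∀ i, 0 ≤ ζ i) (hζ1 : ∑ i, ζ i = 1)
    (μ : Matrix (Fin n) (Fin n) ℝ) (hμ : ∀ i j, 0 ≤ μ i j)
    (hrow : ∀ i, ∑ j, μ i j = ξ i) (hcol : ∀ j, ∑ i, μ i j = ζ j)
    (t : ℝ) (ht : 0 < t) (l : Fin n) :
    |frechetVec Δ t ξ l - frechetVec Δ t ζ l| ≤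
      4 * Real.sqrt (((exp (-((2 * t) • Δ))).trace - 1) / (2 * Real.exp 1 * t)) *
        ∑ i, ∑ j, commuteTimeDist φ lam i j * μ i j :=
  frechetVec_stability_general n Δ φ lam horth heig h0 hpos hconst ξ ζ μ hμ hrow hcol t ht l
end
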